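/- arXiv:2006.02952 — 4 statements merged into one kernel-verified Lean document; each statement's English description precedes it below -/
import Mathlib

section
/- Let Ω be a bounded Lipschitz domain in ℝ³ and let V = {v ∈ (H₀¹(Ω))³ : div v = 0}. Given f ∈ (L²(Ω))³, let u ∈ V satisfy (∇u, ∇v) = (f, v) for all v ∈ V. Suppose p ∈ (H(div;Ω))³ satisfies div p + ∇φ + f = 0 for some φ ∈ H¹(Ω). Then for any v ∈ V, the Pythagoras identity ‖∇u − ∇v‖² + ‖∇u − p‖² = ‖p − ∇v‖² holds in the L² norm. -/
open RealInnerProductSpace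

/-- Extended Prager–Synge theorem (hypercircle) for the Stokes equation, in an
abstract Hilbert-space setting: `W` plays the role of `(H₀¹(Ω))³`, `G` of the
`L²` space of gradients, `L` of `(L²(Ω))³`, `Φ` of `H¹(Ω)`; `grad` is the
gradient, `j` the inclusion `(H₀¹)³ ↪ (L²)³`, `divG` the divergence on
`H(div;Ω)³`, `gradΦ` the scalar gradient, and `V` the divergence-free
subspace. -/
theorem stmt0
    {W G L Φ : Type*}
    [AddCommGroup W] [Module ℝ W]
    [NormedAddCommGroup G] [InnerProductSpace ℝ G]
    [NormedAddCommGroup L] [InnerProductSpace ℝ L]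
    [AddCommGroup Φ] [Module ℝ Φ]
    (grad : W →ₗ[ℝ] G) (j : W →ₗ[ℝ] L)
    (divG : G →ₗ[ℝ] L) (gradΦ : Φ →ₗ[ℝ] L)
    (V : Submodule ℝ W)
    (f : L) (u : W) (p : G)
    (hu : u ∈ V)
    -- u solves the Stokes problem: (∇u, ∇v) = (f, v) for all v ∈ V
    (huSol : ∀ v ∈ V, ⟪grad u, grad v⟫ = ⟪f, j v⟫)
    -- integration by parts for p ∈ H(div)³ against H₀¹ fields
    (hIBP : ∀ w : W, ⟪p, grad w⟫ = -⟪divG p, j w⟫)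
    -- pressure gradients are L²-orthogonal to divergence-free fields
    (hpress : ∀ φ : Φ, ∀ w ∈ V, ⟪gradΦ φ, j w⟫ = 0)
    -- div p + ∇φ + f = 0 for some φ ∈ H¹
    (hp : ∃ φ : Φ, divG p + gradΦ φ + f = 0) :
    ∀ v ∈ V, ‖grad u - grad v‖ ^ 2 + ‖grad u - p‖ ^ 2 = ‖p - grad v‖ ^ 2 := by
  obtain ⟨φ, hφ⟩ := hp
  -- key orthogonality: for w ∈ V, ⟪grad u - p, grad w⟫ = 0
  have key : ∀ w ∈ V, ⟪grad u - p, grad w⟫ = 0 := by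
    intro w hw
    have hdiv : divG p = -(gradΦ φ + f) := by
      have := hφ
      linear_combination (norm := module) this
    rw [inner_sub_left, huSol w hw, hIBP w, hdiv]
    rw [inner_neg_left, inner_add_left, hpress φ w hw]
    ring
  intro v hv
  have horth : ⟪grad u - grad v, grad u - p⟫ = 0 := by
    have h1 := key u hu
    have h2 := key v hv
    rw [inner_sub_right, inner_sub_left, inner_sub_left]
    have h3 : ⟪grad u, grad u⟫ - ⟪p, grad u⟫ = 0 := by
      simpa [inner_sub_left] using h1
    have h4 : ⟪grad u, grad v⟫ - ⟪p, grad v⟫ = 0 := by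
      simpa [inner_sub_left] using h2
    have c1 : ⟪grad v, grad u⟫ = ⟪grad u, grad v⟫ := real_inner_comm _ _
    have c2 : ⟪grad u, p⟫ = ⟪p, grad u⟫ := real_inner_comm _ _
    have c3 : ⟪grad v, p⟫ = ⟪p, grad v⟫ := real_inner_comm _ _
    linarith
  have hsum : p - grad v = (grad u - grad v) + (p - grad u) := by abel
  have horth' : ⟪grad u - grad v, p - grad u⟫ = 0 := by
    have : p - grad u = -(grad u - p) := by abel
    rw [this, inner_neg_right, horth, neg_zero]
  calc ‖grad u - grad v‖ ^ 2 + ‖grad u - p‖ ^ 2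
      = ‖grad u - grad v‖ ^ 2 + 2 * ⟪grad u - grad v, p - grad u⟫ + ‖p - grad u‖ ^ 2 := by
        rw [horth', norm_sub_rev (grad u) p]; ring
    _ = ‖(grad u - grad v) + (p - grad u)‖ ^ 2 := by
        rw [norm_add_sq_real]
    _ = ‖p - grad v‖ ^ 2 := by rw [← hsum]
end

section
/- In the setting of the extended Prager–Synge theorem, the cross term vanishes: if u ∈ V solves (∇u,∇v)=(f,v) for all v ∈ V, and p satisfies div p + ∇φ + f = 0 with φ ∈ H¹(Ω), then for every v ∈ V, (∇u − p, ∇(u − v)) = 0. -/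
open RealInnerProductSpace

/-- In the setting of the extended Prager–Synge theorem for the Stokes
equation, the cross term vanishes: `(∇u − p, ∇(u − v)) = 0` for every
divergence-free `v`.  Abstract setting: `W` = `(H₀¹(Ω))³`, `G` = gradients in
`L²`, `L` = `(L²(Ω))³`, `Φ` = `H¹(Ω)`, `V` = divergence-free subspace. -/
theorem stmt1
    {W G L Φ : Type*}
    [AddCommGroup W] [Module ℝ W]
    [NormedAddCommGroup G] [InnerProductSpace ℝ G]
    [NormedAddCommGroup L] [InnerProductSpace ℝ L]
    [AddCommGroup Φ] [Module ℝ Φ]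
    (grad : W →ₗ[ℝ] G) (j : W →ₗ[ℝ] L)
    (divG : G →ₗ[ℝ] L) (gradΦ : Φ →ₗ[ℝ] L)
    (V : Submodule ℝ W)
    (f : L) (u : W) (p : G)
    (hu : u ∈ V)
    -- u solves the Stokes problem: (∇u, ∇v) = (f, v) for all v ∈ V
    (huSol : ∀ v ∈ V, ⟪grad u, grad v⟫ = ⟪f, j v⟫)
    -- integration by parts for p ∈ H(div)³ against H₀¹ fields
    (hIBP : ∀ w : W, ⟪p, grad w⟫ = -⟪divG p, j w⟫)
    -- pressure gradients are L²-orthogonal to divergence-free fields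
    (hpress : ∀ φ : Φ, ∀ w ∈ V, ⟪gradΦ φ, j w⟫ = 0)
    -- div p + ∇φ + f = 0 for some φ ∈ H¹
    (hp : ∃ φ : Φ, divG p + gradΦ φ + f = 0) :
    ∀ v ∈ V, ⟪grad u - p, grad (u - v)⟫ = 0 := by
  intro v hv
  obtain ⟨φ, hφ⟩ := hp
  have hw : u - v ∈ V := V.sub_mem hu hv
  have hdiv : divG p = -gradΦ φ - f := by
    have := hφ; linear_combination (norm := abel) this
  rw [inner_sub_left, huSol _ hw, hIBP, hdiv, inner_sub_left, inner_neg_left,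
    hpress φ _ hw]
  ring
end

section
/- A posteriori error estimate: Let u ∈ V solve (∇u,∇v)=(f,v) for all v ∈ V, let u_h ∈ V_h ⊂ V be any divergence-free finite element function, and let p_h ∈ RT_h satisfy div p_h + ∇φ_h + f_h = 0 with f_h = π_h f and φ_h ∈ U_h. Assume ‖w − π_h w‖ ≤ C_{0,h}‖∇w‖ for all w ∈ V. Then both ‖∇(u − u_h)‖ and ‖∇u − p_h‖ are bounded above by ‖p_h − ∇u_h‖ + C_{0,h}‖f − f_h‖. -/
open RealInnerProductSpace

/-- A posteriori error estimate (Theorem 1 of the paper): for the Stokes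
problem, both `‖∇(u − u_h)‖` and `‖∇u − p_h‖` are bounded by
`‖p_h − ∇u_h‖ + C₀ₕ ‖f − f_h‖`.  Abstract setting: `W` = `(H₀¹(Ω))³`, `G` =
gradients / `H(div)³` fields, `L` = `(L²(Ω))³`, `Φ` = `H¹(Ω)`; `V` is the
divergence-free subspace, `Vh ⊆ V` a conforming divergence-free FEM space,
`πh` the `L²`-orthogonal projection onto `X_h`. -/
theorem stmt3
    {W G L Φ : Type*}
    [AddCommGroup W] [Module ℝ W]
    [NormedAddCommGroup G] [InnerProductSpace ℝ G]
    [NormedAddCommGroup L] [InnerProductSpace ℝ L]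
    [AddCommGroup Φ] [Module ℝ Φ]
    (grad : W →ₗ[ℝ] G) (j : W →ₗ[ℝ] L)
    (divG : G →ₗ[ℝ] L) (gradΦ : Φ →ₗ[ℝ] L)
    (V Vh : Submodule ℝ W) (hVh : Vh ≤ V)
    (πh : L →ₗ[ℝ] L) (C0 : ℝ) (f : L) (u uh : W) (ph : G)
    (hC0pos : 0 < C0)
    -- πh is an orthogonal projection
    (hproj : ∀ x y : L, ⟪x - πh x, πh y⟫ = 0)
    -- projection error estimate ‖w − π_h w‖ ≤ C₀ₕ ‖∇w‖ for all w ∈ V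
    (hC0 : ∀ w ∈ V, ‖j w - πh (j w)‖ ≤ C0 * ‖grad w‖)
    -- solvability of the Stokes problem for arbitrary data (Lax–Milgram)
    (hsolv : ∀ g : L, ∃ w ∈ V, ∀ v ∈ V, ⟪grad w, grad v⟫ = ⟪g, j v⟫)
    -- integration by parts for H(div)³ fields against H₀¹ fields
    (hIBP : ∀ (q : G) (w : W), ⟪q, grad w⟫ = -⟪divG q, j w⟫)
    -- pressure gradients are L²-orthogonal to divergence-free fields
    (hpress : ∀ φ : Φ, ∀ w ∈ V, ⟪gradΦ φ, j w⟫ = 0)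
    (hu : u ∈ V)
    -- u solves the Stokes problem with data f
    (huSol : ∀ v ∈ V, ⟪grad u, grad v⟫ = ⟪f, j v⟫)
    -- u_h is any divergence-free finite element function
    (huh : uh ∈ Vh)
    -- p_h satisfies div p_h + ∇φ_h + f_h = 0 with f_h = π_h f
    (hph : ∃ φh : Φ, divG ph + gradΦ φh + πh f = 0) :
    ‖grad u - grad uh‖ ≤ ‖ph - grad uh‖ + C0 * ‖f - πh f‖ ∧
    ‖grad u - ph‖ ≤ ‖ph - grad uh‖ + C0 * ‖f - πh f‖ := by
  obtain ⟨ub, hubV, hubSol⟩ := hsolv (πh f)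
  obtain ⟨φh, hφ⟩ := hph
  -- orthogonality of grad ub - ph to grad v for v ∈ V
  have horth : ∀ v ∈ V, ⟪grad ub - ph, grad v⟫ = 0 := by
    intro v hv
    have hdiv : divG ph = -(gradΦ φh + πh f) :=
      eq_neg_of_add_eq_zero_left (by rw [← add_assoc]; exact hφ)
    rw [inner_sub_left, hubSol v hv, hIBP, hdiv]
    simp [inner_add_left, hpress φh v hv]
  have huhV : uh ∈ V := hVh huh
  -- hypercircle / Pythagoras
  have hab : ⟪grad ub - ph, grad ub - grad uh⟫ = 0 := by
    have := horth (ub - uh) (sub_mem hubV huhV)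
    simpa [map_sub] using this
  set a := grad ub - ph with ha
  set b := grad ub - grad uh with hb
  have hpyth : ‖b - a‖ ^ 2 = ‖b‖ ^ 2 + ‖a‖ ^ 2 := by
    have h1 : ⟪b, a⟫ = 0 := by rw [real_inner_comm]; exact hab
    have := norm_sub_sq_real b a
    rw [h1] at this
    linarith [this]
  have hba : b - a = ph - grad uh := by rw [ha, hb]; abel
  have key1 : ‖b‖ ≤ ‖ph - grad uh‖ := by
    rw [← hba]; nlinarith [norm_nonneg a, norm_nonneg b, norm_nonneg (b - a)]
  have key2 : ‖a‖ ≤ ‖ph - grad uh‖ := by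
    rw [← hba]; nlinarith [norm_nonneg a, norm_nonneg b, norm_nonneg (b - a)]
  -- perturbation estimate
  have heV : u - ub ∈ V := sub_mem hu hubV
  have key3 : ‖grad u - grad ub‖ ≤ C0 * ‖f - πh f‖ := by
    set e := u - ub with he
    have hge : grad u - grad ub = grad e := by simp [he, map_sub]
    rw [hge]
    have h1 : ⟪grad e, grad e⟫ = ⟪f - πh f, j e⟫ := by
      have h2 : grad e = grad u - grad ub := by simp [he, map_sub]
      have hl : ⟪grad u - grad ub, grad e⟫ = ⟪f - πh f, j e⟫ := by
        rw [inner_sub_left, huSol e heV, hubSol e heV, ← inner_sub_left]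
      rw [← h2] at hl; exact hl
    have h3 : ⟪f - πh f, j e⟫ = ⟪f - πh f, j e - πh (j e)⟫ := by
      rw [inner_sub_right, hproj f (j e)]; ring
    have h4 : ⟪grad e, grad e⟫ ≤ ‖f - πh f‖ * (C0 * ‖grad e‖) := by
      rw [h1, h3]
      calc ⟪f - πh f, j e - πh (j e)⟫ ≤ ‖f - πh f‖ * ‖j e - πh (j e)‖ :=
            real_inner_le_norm _ _
        _ ≤ ‖f - πh f‖ * (C0 * ‖grad e‖) := by
            apply mul_le_mul_of_nonneg_left (hC0 e heV) (norm_nonneg _)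
    have h5 : ‖grad e‖ ^ 2 ≤ C0 * ‖f - πh f‖ * ‖grad e‖ := by
      rw [← real_inner_self_eq_norm_sq]; nlinarith [h4]
    rcases eq_or_lt_of_le (norm_nonneg (grad e)) with h0 | h0
    · rw [← h0]; positivity
    · have hmul : ‖grad e‖ * ‖grad e‖ ≤ (C0 * ‖f - πh f‖) * ‖grad e‖ := by
        nlinarith [h5]
      exact le_of_mul_le_mul_right hmul h0
  constructor
  · have ht : ‖grad u - grad uh‖ ≤ ‖grad u - grad ub‖ + ‖b‖ := by
      have : grad u - grad uh = (grad u - grad ub) + b := by rw [hb]; abel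
      rw [this]; exact norm_add_le _ _
    linarith
  · have ht : ‖grad u - ph‖ ≤ ‖grad u - grad ub‖ + ‖a‖ := by
      have : grad u - ph = (grad u - grad ub) + a := by rw [ha]; abel
      rw [this]; exact norm_add_le _ _
    linarith
end

section
/- A priori error estimate: Let κ_h = max over f_h ∈ X_h of min over p_h ∈ RT_h (subject to div p_h + ∇φ_h + f_h = 0 for some φ_h ∈ U_h) and v_h ∈ V_h of ‖p_h − ∇v_h‖/‖f_h‖, and let C_h = sqrt(C_{0,h}² + κ_h²). For f ∈ L²(Ω)³ let u solve the Stokes problem and u_h = P_h u its Galerkin projection onto V_h. Then ‖∇u − ∇u_h‖ ≤ C_h ‖f‖. -/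
open RealInnerProductSpace

/-- A priori error estimate (Theorem 2 of the paper): with
`C_h = sqrt(C₀ₕ² + κ_h²)`, the Galerkin (Ritz) projection `u_h = P_h u`
satisfies `‖∇u − ∇u_h‖ ≤ C_h ‖f‖`.  Abstract setting: `W` = `(H₀¹(Ω))³`,
`G` = gradients / `H(div)³` fields, `L` = `(L²(Ω))³`, `Φ` = `H¹(Ω)` (⊇ U_h);
`V` the divergence-free subspace, `Vh ⊆ V` the Scott–Vogelius FEM space,
`Xh` the discontinuous FEM space, `πh` the `L²`-orthogonal projection onto
`Xh`.  The defining max-min property of `κ_h` is expressed by `hκ`: for every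
`f_h ∈ X_h` the minimum of `‖p_h − ∇v_h‖` over admissible pairs is at most
`κ_h ‖f_h‖`. -/
theorem stmt4
    {W G L Φ : Type*}
    [AddCommGroup W] [Module ℝ W]
    [NormedAddCommGroup G] [InnerProductSpace ℝ G]
    [NormedAddCommGroup L] [InnerProductSpace ℝ L]
    [AddCommGroup Φ] [Module ℝ Φ]
    (grad : W →ₗ[ℝ] G) (j : W →ₗ[ℝ] L)
    (divG : G →ₗ[ℝ] L) (gradΦ : Φ →ₗ[ℝ] L)
    (V Vh : Submodule ℝ W) (hVh : Vh ≤ V)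
    (Xh : Submodule ℝ L) (πh : L →ₗ[ℝ] L)
    (C0 κ : ℝ) (f : L) (u uh : W)
    (hC0pos : 0 < C0) (hκpos : 0 ≤ κ)
    -- πh is an orthogonal projection with range in Xh
    (hproj : ∀ x y : L, ⟪x - πh x, πh y⟫ = 0)
    (hrange : ∀ x : L, πh x ∈ Xh)
    -- projection error estimate ‖w − π_h w‖ ≤ C₀ₕ ‖∇w‖ for all w ∈ V
    (hC0 : ∀ w ∈ V, ‖j w - πh (j w)‖ ≤ C0 * ‖grad w‖)
    -- solvability of the Stokes problem for arbitrary data (Lax–Milgram)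
    (hsolv : ∀ g : L, ∃ w ∈ V, ∀ v ∈ V, ⟪grad w, grad v⟫ = ⟪g, j v⟫)
    -- integration by parts for H(div)³ fields against H₀¹ fields
    (hIBP : ∀ (q : G) (w : W), ⟪q, grad w⟫ = -⟪divG q, j w⟫)
    -- pressure gradients are L²-orthogonal to divergence-free fields
    (hpress : ∀ φ : Φ, ∀ w ∈ V, ⟪gradΦ φ, j w⟫ = 0)
    -- κ_h bounds the max-min in its definition: for every f_h ∈ X_h there is
    -- an admissible pair (p_h, v_h) with ‖p_h − ∇v_h‖ ≤ κ_h ‖f_h‖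
    (hκ : ∀ fh ∈ Xh, ∃ ph : G, ∃ φh : Φ, ∃ vh ∈ Vh,
        divG ph + gradΦ φh + fh = 0 ∧ ‖ph - grad vh‖ ≤ κ * ‖fh‖)
    (hu : u ∈ V)
    -- u solves the Stokes problem with data f
    (huSol : ∀ v ∈ V, ⟪grad u, grad v⟫ = ⟪f, j v⟫)
    -- u_h = P_h u is the Ritz projection of u onto Vh
    (huh : uh ∈ Vh)
    (hRitz : ∀ vh ∈ Vh, ⟪grad u - grad uh, grad vh⟫ = 0) :
    ‖grad u - grad uh‖ ≤ Real.sqrt (C0 ^ 2 + κ ^ 2) * ‖f‖ := by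
  obtain ⟨ph, φh, vh, hvh, heq, hbd⟩ := hκ (πh f) (hrange f)
  set e : G := grad u - grad uh with he
  set w : W := u - uh with hwdef
  have hw : w ∈ V := V.sub_mem hu (hVh huh)
  have hgw : grad w = e := by simp [hwdef, he, map_sub]
  have hjw : j w ∈ Set.univ := trivial
  -- step 1 : ‖e‖² = ⟪f, j w⟫
  have step1 : ⟪e, e⟫ = ⟪f, j w⟫ := by
    have h1 : ⟪grad u, e⟫ = ⟪f, j w⟫ := by
      have := huSol w hw
      rw [hgw] at this; exact this
    have h2 : ⟪e, grad uh⟫ = 0 := hRitz uh huh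
    calc ⟪e, e⟫ = ⟪grad u, e⟫ - ⟪grad uh, e⟫ := by
          rw [he, inner_sub_left]
      _ = ⟪f, j w⟫ := by
          have h3 : ⟪grad uh, e⟫ = 0 := by
            rw [real_inner_comm]; exact h2
          rw [h1, h3, sub_zero]
  -- step 2 : low-frequency part
  have step2 : ⟪f - πh f, j w⟫ = ⟪f - πh f, j w - πh (j w)⟫ := by
    rw [inner_sub_right, hproj f (j w), sub_zero]
  -- step 3 : high-frequency part
  have step3 : ⟪πh f, j w⟫ = ⟪ph - grad vh, e⟫ := by
    have hfh : πh f = -divG ph - gradΦ φh := by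
      have h := eq_neg_of_add_eq_zero_right heq
      rw [h]; abel
    have hvhe : ⟪e, grad vh⟫ = 0 := hRitz vh hvh
    calc ⟪πh f, j w⟫ = ⟪-divG ph - gradΦ φh, j w⟫ := by rw [hfh]
      _ = -⟪divG ph, j w⟫ - ⟪gradΦ φh, j w⟫ := by
          rw [inner_sub_left, inner_neg_left]
      _ = ⟪ph, grad w⟫ := by rw [← hIBP ph w, hpress φh w hw, sub_zero]
      _ = ⟪ph, e⟫ := by rw [hgw]
      _ = ⟪ph - grad vh, e⟫ := by
          have hvhe2 : ⟪grad vh, e⟫ = 0 := by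
            rw [real_inner_comm]; exact hvhe
          rw [inner_sub_left, hvhe2, sub_zero]
  -- combine
  have hnorm : ‖e‖ ^ 2 = ⟪e, e⟫ := (real_inner_self_eq_norm_sq e).symm
  have hsplit : ⟪f, j w⟫ = ⟪f - πh f, j w⟫ + ⟪πh f, j w⟫ := by
    rw [← inner_add_left, sub_add_cancel]
  set a : ℝ := ‖f - πh f‖ with ha
  set b : ℝ := ‖πh f‖ with hb
  have hbound : ‖e‖ ^ 2 ≤ (C0 * a + κ * b) * ‖e‖ := by
    have c1 : ⟪f - πh f, j w - πh (j w)⟫ ≤ a * (C0 * ‖e‖) := by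
      calc ⟪f - πh f, j w - πh (j w)⟫ ≤ a * ‖j w - πh (j w)‖ :=
            real_inner_le_norm _ _
        _ ≤ a * (C0 * ‖e‖) := by
            have := hC0 w hw
            rw [hgw] at this
            exact mul_le_mul_of_nonneg_left this (norm_nonneg _)
    have c2 : ⟪ph - grad vh, e⟫ ≤ κ * b * ‖e‖ := by
      calc ⟪ph - grad vh, e⟫ ≤ ‖ph - grad vh‖ * ‖e‖ := real_inner_le_norm _ _
        _ ≤ κ * b * ‖e‖ := mul_le_mul_of_nonneg_right hbd (norm_nonneg _)
    calc ‖e‖ ^ 2 = ⟪f - πh f, j w - πh (j w)⟫ + ⟪ph - grad vh, e⟫ := by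
          rw [hnorm, step1, hsplit, step2, step3]
      _ ≤ a * (C0 * ‖e‖) + κ * b * ‖e‖ := add_le_add c1 c2
      _ = (C0 * a + κ * b) * ‖e‖ := by ring
  -- Pythagoras
  have hpyth : a ^ 2 + b ^ 2 = ‖f‖ ^ 2 := by
    have horth : ⟪f - πh f, πh f⟫ = 0 := hproj f f
    have hexp : ‖(f - πh f) + πh f‖ ^ 2
        = a ^ 2 + 2 * ⟪f - πh f, πh f⟫ + b ^ 2 := norm_add_sq_real _ _
    rw [sub_add_cancel, horth] at hexp
    linarith
  -- finish
  have hene : ‖e‖ ≤ C0 * a + κ * b := by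
    rcases eq_or_lt_of_le (norm_nonneg e) with h0 | h0
    · rw [← h0]
      positivity
    · have := hbound
      nlinarith
  have hcs : C0 * a + κ * b ≤ Real.sqrt (C0 ^ 2 + κ ^ 2) * ‖f‖ := by
    set s : ℝ := Real.sqrt (C0 ^ 2 + κ ^ 2) with hs
    have hs0 : 0 ≤ s := Real.sqrt_nonneg _
    have hs2 : s ^ 2 = C0 ^ 2 + κ ^ 2 := Real.sq_sqrt (by positivity)
    have hf0 : (0:ℝ) ≤ ‖f‖ := norm_nonneg _
    have ha0 : 0 ≤ a := norm_nonneg _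
    have hb0 : 0 ≤ b := norm_nonneg _
    have hsq : (C0 * a + κ * b) ^ 2 ≤ (s * ‖f‖) ^ 2 := by
      nlinarith [sq_nonneg (C0 * b - κ * a)]
    nlinarith [mul_nonneg hs0 hf0, sq_nonneg (C0 * a + κ * b + s * ‖f‖)]
  exact le_trans hene hcs
end
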